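/- The pseudospin expectation obeys the symmetry F(γ, β, θ) = F(−β′, −γ′, θ) for all γ, β ∈ ℝ^p and all θ ∈ ℝ, where γ′ = (γ_p, …, γ_1) and β′ = (β_p, …, β_1) are the reversed tuples; i.e., reversing the sequence, negating all angles, and exchanging the roles of the γ- and β-angles leaves the expectation unchanged. -/

import Mathlib

open Matrix Complex Real

noncomputable section

def σx : Matrix (Fin 2) (Fin 2) ℂ := !![0, 1; 1, 0]

def σz : Matrix (Fin 2) (Fin 2) ℂ := !![1, 0; 0, -1]

/-- The Bloch axis `n(θ) = cos θ · σz + sin θ · σx`. -/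
def nvec (θ : ℝ) : Matrix (Fin 2) (Fin 2) ℂ :=
  (Real.cos θ : ℂ) • σz + (Real.sin θ : ℂ) • σx

/-- `U_B(β) = exp(−2iβ·σz)`. -/
def UB (β : ℝ) : Matrix (Fin 2) (Fin 2) ℂ :=
  NormedSpace.exp ((-2 * β * Complex.I) • σz)

/-- `U_C(γ,θ) = exp(−2iγ·n(θ))`. -/
def UC (γ θ : ℝ) : Matrix (Fin 2) (Fin 2) ℂ :=
  NormedSpace.exp ((-2 * γ * Complex.I) • nvec θ)

/-- The level-`p` QAOA circuit `U(γ,β,θ) = U_B(β_p)·U_C(γ_p,θ)·⋯·U_B(β_1)·U_C(γ_1,θ)`. -/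
def Uqaoa (p : ℕ) (γ β : Fin p → ℝ) (θ : ℝ) : Matrix (Fin 2) (Fin 2) ℂ :=
  ((List.ofFn fun i : Fin p => UB (β i) * UC (γ i) θ).reverse).prod

/-- The pseudospin expectation `F(γ,β,θ) = Re tr[n(θ)·U·σz·U†]`. -/
def Fps (p : ℕ) (γ β : Fin p → ℝ) (θ : ℝ) : ℝ :=
  (Matrix.trace (nvec θ * Uqaoa p γ β θ * σz * (Uqaoa p γ β θ)ᴴ)).re

end
noncomputable section

/-! The argument is a reflection. `V = n(θ/2)` is a Hermitian involution, and conjugation by it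
maps `n(β)` to `n(θ - β)`: it swaps `σz = n(0)` with `n(θ)`, hence `U_B(b)` with `U_C(b, θ)`.
So `V U V` is the circuit with the roles of the angles exchanged, and its adjoint reverses the
order of the layers and negates every angle: `V U V = U'ᴴ` with `U' = U(−β′, −γ′, θ)`. Conjugating
`σz Uᴴ n(θ) U` by `V` then gives `n(θ) U' σz U'ᴴ`, and the trace is invariant under conjugation
and cyclic permutations. -/

lemma nvec_zero : nvec 0 = σz := by
  simp [nvec]

lemma nvec_conjTranspose (θ : ℝ) : (nvec θ)ᴴ = nvec θ := by
  ext i j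
  fin_cases i <;> fin_cases j <;> simp [nvec, σx, σz, -ofReal_cos, -ofReal_sin]

lemma nvec_mul_self (θ : ℝ) : nvec θ * nvec θ = 1 := by
  have h := Complex.sin_sq_add_cos_sq (θ : ℂ)
  ext i j
  fin_cases i <;> fin_cases j <;>
    simp [nvec, σx, σz, Matrix.mul_apply, Fin.sum_univ_two] <;> grind

lemma nvec_mul_nvec_mul_nvec (α β : ℝ) : nvec α * nvec β * nvec α = nvec (2 * α - β) := by
  have h := Complex.sin_sq_add_cos_sq (α : ℂ)
  ext i j
  fin_cases i <;> fin_cases j <;>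
    simp [nvec, σx, σz, Matrix.mul_apply, Fin.sum_univ_two, Complex.cos_sub, Complex.sin_sub,
      Complex.cos_two_mul, Complex.sin_two_mul] <;> grind

def nvecUnit (α : ℝ) : (Matrix (Fin 2) (Fin 2) ℂ)ˣ :=
  ⟨nvec α, nvec α, nvec_mul_self α, nvec_mul_self α⟩

def nvecConj (α : ℝ) : Matrix (Fin 2) (Fin 2) ℂ ≃+* Matrix (Fin 2) (Fin 2) ℂ :=
  MulSemiringAction.toRingEquiv _ _ (ConjAct.toConjAct (nvecUnit α))

lemma nvecConj_apply (α : ℝ) (M : Matrix (Fin 2) (Fin 2) ℂ) :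
    nvecConj α M = nvec α * M * nvec α :=
  ConjAct.units_smul_def _ _

lemma trace_nvecConj (α : ℝ) (M : Matrix (Fin 2) (Fin 2) ℂ) : trace (nvecConj α M) = trace M :=
  trace_units_conj (nvecUnit α) M

lemma nvecConj_conjTranspose (α : ℝ) (M : Matrix (Fin 2) (Fin 2) ℂ) :
    nvecConj α Mᴴ = (nvecConj α M)ᴴ := by
  simp only [nvecConj_apply, conjTranspose_mul, nvec_conjTranspose, Matrix.mul_assoc]

lemma nvecConj_nvec (α β : ℝ) : nvecConj α (nvec β) = nvec (2 * α - β) := by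
  rw [nvecConj_apply, nvec_mul_nvec_mul_nvec]

lemma nvecConj_UC (α γ θ : ℝ) : nvecConj α (UC γ θ) = UC γ (2 * α - θ) := by
  rw [UC, UC, ← nvecConj_nvec, nvecConj_apply, nvecConj_apply, ← Matrix.smul_mul,
    ← Matrix.mul_smul]
  exact (exp_units_conj (nvecUnit α) _).symm

lemma UC_zero (γ : ℝ) : UC γ 0 = UB γ := by
  rw [UC, UB, nvec_zero]

lemma nvecConj_half_UB (γ θ : ℝ) : nvecConj (θ / 2) (UB γ) = UC γ θ := by
  rw [← UC_zero, nvecConj_UC, show 2 * (θ / 2) - 0 = θ by ring]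

lemma nvecConj_half_UC (γ θ : ℝ) : nvecConj (θ / 2) (UC γ θ) = UB γ := by
  rw [← UC_zero, nvecConj_UC, show 2 * (θ / 2) - θ = 0 by ring]

lemma UC_conjTranspose (γ θ : ℝ) : (UC γ θ)ᴴ = UC (-γ) θ := by
  rw [UC, UC, ← Matrix.exp_conjTranspose, conjTranspose_smul, nvec_conjTranspose]
  congr 2
  simp

lemma UB_conjTranspose (γ : ℝ) : (UB γ)ᴴ = UB (-γ) := by
  rw [← UC_zero, UC_conjTranspose, UC_zero]

lemma List.reverse_ofFn {α : Type*} {n : ℕ} (f : Fin n → α) :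
    (List.ofFn f).reverse = List.ofFn (f ∘ Fin.rev) := by
  rw [List.ofFn_eq_map, ← List.map_reverse, List.finRange_reverse, List.map_map, List.ofFn_eq_map]

lemma nvecConj_half_Uqaoa (p : ℕ) (γ β : Fin p → ℝ) (θ : ℝ) :
    nvecConj (θ / 2) (Uqaoa p γ β θ) =
      (Uqaoa p (fun i => -β (Fin.rev i)) (fun i => -γ (Fin.rev i)) θ)ᴴ := by
  rw [Uqaoa, Uqaoa, map_list_prod, conjTranspose_list_prod, List.map_reverse, List.map_reverse,
    List.reverse_reverse, List.map_ofFn, List.map_ofFn, List.reverse_ofFn]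
  congr 2
  funext i
  simp [map_mul, nvecConj_half_UB, nvecConj_half_UC, UB_conjTranspose, UC_conjTranspose]

theorem pseudospin_reverse_negate_swap_symmetry_general
    (p : ℕ) (γ β : Fin p → ℝ) (θ : ℝ) :
    Fps p γ β θ = Fps p (fun i => -β (Fin.rev i)) (fun i => -γ (Fin.rev i)) θ := by
  set U := Uqaoa p γ β θ
  set U' := Uqaoa p (fun i => -β (Fin.rev i)) (fun i => -γ (Fin.rev i)) θ
  have hU' : U' = nvecConj (θ / 2) Uᴴ := by
    rw [nvecConj_conjTranspose, nvecConj_half_Uqaoa, conjTranspose_conjTranspose]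
  have hσz : nvecConj (θ / 2) σz = nvec θ := by
    rw [← nvec_zero, nvecConj_nvec, show 2 * (θ / 2) - 0 = θ by ring]
  have hn : nvecConj (θ / 2) (nvec θ) = σz := by
    rw [nvecConj_nvec, show 2 * (θ / 2) - θ = 0 by ring, nvec_zero]
  have key : trace (nvec θ * U * σz * Uᴴ) = trace (nvec θ * U' * σz * U'ᴴ) :=
    calc trace (nvec θ * U * σz * Uᴴ) = trace (σz * Uᴴ * nvec θ * U) := by
          rw [Matrix.mul_assoc, trace_mul_comm, ← Matrix.mul_assoc]
      _ = trace (nvecConj (θ / 2) (σz * Uᴴ * nvec θ * U)) := (trace_nvecConj _ _).symm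
      _ = trace (nvec θ * U' * σz * U'ᴴ) := by
          rw [hU', ← nvecConj_conjTranspose, conjTranspose_conjTranspose]
          simp only [map_mul, hσz, hn]
  exact congrArg Complex.re key

/-- Reversing the angle sequence, negating all angles, and exchanging the roles of the
γ- and β-angles leaves the pseudospin expectation unchanged: `F(γ,β,θ) = F(−β′,−γ′,θ)`. -/
theorem pseudospin_reverse_negate_swap_symmetry
    (p : ℕ) (hp : 1 ≤ p) (γ β : Fin p → ℝ) (θ : ℝ) :
    Fps p γ β θ = Fps p (fun i => -β (Fin.rev i)) (fun i => -γ (Fin.rev i)) θ :=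
  pseudospin_reverse_negate_swap_symmetry_general p γ β θ
end
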